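/- arXiv:2010.11456 — 2 statements merged into one kernel-verified Lean document; each statement's English description precedes it below -/
import Mathlib

section
/- Let n ≥ 1, let A, B ∈ ℝ^{n×n} both be Monge matrices, and let 0 ≤ k ≤ n. Then the pair (id, id) consisting of the identity permutation taken twice is an optimal solution of RecovAP: it is feasible (it agrees on all n ≥ k indices), and for every feasible pair (σ, π) of permutations (i.e., |{i : σ(i) = π(i)}| ≥ k) one has ∑_{i=1}^{n} A_{i,i} + ∑_{i=1}^{n} B_{i,i} ≤ ∑_{i=1}^{n} A_{i,σ(i)} + ∑_{i=1}^{n} B_{i,π(i)}. -/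
lemma monge_id_min_aux (n : ℕ) (A : Fin n → Fin n → ℝ)
    (hA : ∀ i k j l : Fin n, i < k → j < l → A i j + A k l ≤ A i l + A k j) :
    ∀ (m : ℕ) (σ : Equiv.Perm (Fin n)),
      (Finset.univ.filter fun i => σ i ≠ i).card ≤ m →
      ∑ i, A i i ≤ ∑ i, A i (σ i) := by
  intro m
  induction m with
  | zero =>
    intro σ h
    have hall : ∀ i, σ i = i := by
      intro i
      by_contra hi
      have hmem : i ∈ Finset.univ.filter fun i => σ i ≠ i := by simp [hi]
      have := Finset.card_pos.mpr ⟨i, hmem⟩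
      omega
    exact le_of_eq (Finset.sum_congr rfl fun i _ => by rw [hall i])
  | succ m ih =>
    intro σ h
    by_cases hfix : ∀ i, σ i = i
    · exact le_of_eq (Finset.sum_congr rfl fun i _ => by rw [hfix i])
    · push_neg at hfix
      obtain ⟨i0, hi0⟩ := hfix
      set S := Finset.univ.filter fun i => σ i ≠ i with hSdef
      have hS : S.Nonempty := ⟨i0, by simp [hSdef, hi0]⟩
      set i := S.min' hS with hidef
      have hi : σ i ≠ i := (Finset.mem_filter.mp (S.min'_mem hS)).2
      have hmin : ∀ x : Fin n, x < i → σ x = x := by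
        intro x hx
        by_contra hx'
        exact absurd (S.min'_le x (by simp [hSdef, hx'])) (not_le.mpr hx)
      set j := σ.symm i with hjdef
      have hσj : σ j = i := σ.apply_symm_apply i
      have hji : j ≠ i := fun hh => hi (by rw [← hh, hσj, hh])
      have hij : i < j := by
        rcases lt_or_ge i j with h1 | h1
        · exact h1
        · have : j < i := lt_of_le_of_ne h1 hji
          exact absurd (hσj ▸ hmin j this) (Ne.symm hji)
      have hiσi : i < σ i := by
        rcases lt_or_ge i (σ i) with h1 | h1
        · exact h1
        · have hlt : σ i < i := lt_of_le_of_ne h1 hi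
          have := hmin (σ i) hlt
          exact absurd (σ.injective this) hi
      have hmonge : A i (σ j) + A j (σ i) ≤ A i (σ i) + A j (σ j) :=
        hA i j (σ j) (σ i) hij (by rw [hσj]; exact hiσi)
      set σ' := σ * Equiv.swap i j with hσ'def
      have hσ'i : σ' i = i := by simp [hσ'def, Equiv.swap_apply_left, hσj]
      have hσ'j : σ' j = σ i := by simp [hσ'def, Equiv.swap_apply_right]
      have hσ'other : ∀ x : Fin n, x ≠ i → x ≠ j → σ' x = σ x := by
        intro x h1 h2
        simp [hσ'def, Equiv.swap_apply_of_ne_of_ne h1 h2]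
      -- card bound
      have hsub : (Finset.univ.filter fun x => σ' x ≠ x) ⊆ S.erase i := by
        intro x hx
        rw [Finset.mem_filter] at hx
        rcases eq_or_ne x i with rfl | hxi
        · exact absurd hσ'i hx.2
        · rcases eq_or_ne x j with rfl | hxj
          · exact Finset.mem_erase.mpr ⟨hxi, by simp [hSdef, hσj.symm ▸ (Ne.symm hji)]⟩
          · refine Finset.mem_erase.mpr ⟨hxi, ?_⟩
            simp only [hSdef, Finset.mem_filter, Finset.mem_univ, true_and]
            rw [← hσ'other x hxi hxj]; exact hx.2
      have hcard : (Finset.univ.filter fun x => σ' x ≠ x).card ≤ m := by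
        have h1 := Finset.card_le_card hsub
        have h2 : (S.erase i).card = S.card - 1 :=
          Finset.card_erase_of_mem (S.min'_mem hS)
        have h3 : 1 ≤ S.card := Finset.card_pos.mpr hS
        omega
      have ihσ' := ih σ' hcard
      -- sum comparison
      have hjmem : j ∈ Finset.univ.erase i :=
        Finset.mem_erase.mpr ⟨hji, Finset.mem_univ j⟩
      have decomp : ∀ f : Fin n → ℝ,
          ∑ x, f x = f i + (f j + ∑ x ∈ (Finset.univ.erase i).erase j, f x) := by
        intro f
        rw [Finset.add_sum_erase _ f hjmem, Finset.add_sum_erase _ f (Finset.mem_univ i)]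
      have hrest : ∑ x ∈ (Finset.univ.erase i).erase j, A x (σ' x)
          = ∑ x ∈ (Finset.univ.erase i).erase j, A x (σ x) := by
        refine Finset.sum_congr rfl fun x hx => ?_
        rw [Finset.mem_erase, Finset.mem_erase] at hx
        rw [hσ'other x hx.2.1 hx.1]
      have key : ∑ x, A x (σ' x) ≤ ∑ x, A x (σ x) := by
        rw [decomp (fun x => A x (σ' x)), decomp (fun x => A x (σ x))]
        simp only [hσ'i, hσ'j]
        have := hA i j (σ j) (σ i) hij (by rw [hσj]; exact hiσi)
        rw [hσj] at this ⊢
        linarith [hrest, this]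
      exact le_trans ihσ' key

lemma monge_id_min (n : ℕ) (A : Fin n → Fin n → ℝ)
    (hA : ∀ i k j l : Fin n, i < k → j < l → A i j + A k l ≤ A i l + A k j)
    (σ : Equiv.Perm (Fin n)) : ∑ i, A i i ≤ ∑ i, A i (σ i) :=
  monge_id_min_aux n A hA _ σ le_rfl

/-- **Both cost matrices Monge: `(id, id)` solves RecovAP.**
If `A` and `B` are Monge matrices and `0 ≤ k ≤ n`, then the pair of identity permutations is
feasible (it agrees on all `n ≥ k` indices) and its cost is at most the cost of every
feasible pair `(σ, π)`, i.e. every pair agreeing on at least `k` indices. -/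
theorem recovAP_monge_monge_identity_optimal (n k : ℕ) (hn : 1 ≤ n) (hk : k ≤ n)
    (A B : Fin n → Fin n → ℝ)
    (hA : ∀ i k j l : Fin n, i < k → j < l → A i j + A k l ≤ A i l + A k j)
    (hB : ∀ i k j l : Fin n, i < k → j < l → B i j + B k l ≤ B i l + B k j) :
    k ≤ (Finset.univ.filter fun i : Fin n =>
          (1 : Equiv.Perm (Fin n)) i = (1 : Equiv.Perm (Fin n)) i).card ∧
    ∀ σ π : Equiv.Perm (Fin n),
      k ≤ (Finset.univ.filter fun i : Fin n => σ i = π i).card →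
      (∑ i, A i i) + (∑ i, B i i) ≤ (∑ i, A i (σ i)) + (∑ i, B i (π i)) := by
  constructor
  · simpa using hk
  · intro σ π _
    exact add_le_add (monge_id_min n A hA σ) (monge_id_min n B hB π)
end

section
/- Let n ≥ 1, let A, B ∈ ℝ^{n×n} both be Anti-Monge matrices, and let 0 ≤ k ≤ n. Then the pair (rev, rev), where rev(i) = n+1−i, is an optimal solution of RecovAP: it is feasible (it agrees on all n ≥ k indices), and for every feasible pair (σ, π) of permutations (i.e., |{i : σ(i) = π(i)}| ≥ k) one has ∑_{i=1}^{n} A_{i,n+1−i} + ∑_{i=1}^{n} B_{i,n+1−i} ≤ ∑_{i=1}^{n} A_{i,σ(i)} + ∑_{i=1}^{n} B_{i,π(i)}. -/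
/-!
The two cost terms are independent, so it suffices that `rev` minimises `∑ i, A i (σ i)` over all
permutations `σ` when `A` is Anti-Monge. If `σ ≠ rev`, let `i` be the first index where they
differ and `k := σ⁻¹ (rev i)`. Minimality forces `i < k` and `σ i < σ k`, so the Anti-Monge
inequality says that exchanging the values at `i` and `k` does not increase the cost, while it
makes `σ` agree with `rev` at one more index. Induction on the number of disagreements concludes.
-/

open Finset

def IsAntiMonge {ι κ M : Type*} [LinearOrder ι] [LinearOrder κ] [Add M] [LE M]
    (A : ι → κ → M) : Prop :=
  ∀ i k j l, i < k → j < l → A i l + A k j ≤ A i j + A k l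

theorem Fintype.sum_le_sum_of_pair_le {α M : Type*} [Fintype α] [DecidableEq α]
    [AddCommMonoid M] [PartialOrder M] [IsOrderedAddMonoid M] {f g : α → M} {i k : α}
    (hik : i ≠ k) (hfg : ∀ x, x ≠ i → x ≠ k → f x = g x) (h : f i + f k ≤ g i + g k) :
    ∑ x, f x ≤ ∑ x, g x := by
  rw [← sum_add_sum_compl {i, k} f, ← sum_add_sum_compl {i, k} g, sum_pair hik, sum_pair hik]
  have hrest : ∑ x ∈ {i, k}ᶜ, f x = ∑ x ∈ {i, k}ᶜ, g x :=
    Finset.sum_congr rfl fun x hx => hfg x (by simp_all) (by simp_all)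
  rw [hrest]
  exact add_le_add_left h _

theorem IsAntiMonge.sum_swap_trans_le {ι κ M : Type*} [LinearOrder ι] [LinearOrder κ] [Fintype ι]
    [AddCommMonoid M] [PartialOrder M] [IsOrderedAddMonoid M] {A : ι → κ → M}
    (hA : IsAntiMonge A) (σ : ι ≃ κ) {i k : ι} (hik : i < k) (hσ : σ i < σ k) :
    ∑ x, A x (((Equiv.swap i k).trans σ) x) ≤ ∑ x, A x (σ x) := by
  refine Fintype.sum_le_sum_of_pair_le hik.ne (fun x hxi hxk => ?_) ?_
  · simp [Equiv.swap_apply_of_ne_of_ne hxi hxk]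
  · simpa using hA i k (σ i) (σ k) hik hσ

theorem card_filter_swap_ne_lt {α β : Type*} [Fintype α] [DecidableEq α] [DecidableEq β]
    (f g : α → β) {i k : α} (hi : f i ≠ g i) (hk : f k = g i) (hgik : g i ≠ g k) :
    #{x | f (Equiv.swap i k x) ≠ g x} < #{x | f x ≠ g x} := by
  refine (card_le_card fun x hx => ?_).trans_lt (card_erase_lt_of_mem (by simpa using hi))
  simp only [mem_erase, mem_filter, mem_univ, true_and] at hx ⊢
  by_cases hxi : x = i
  · subst hxi; simp [hk] at hx
  by_cases hxk : x = k
  · subst hxk; exact ⟨hxi, hk ▸ hgik⟩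
  · exact ⟨hxi, by rwa [Equiv.swap_apply_of_ne_of_ne hxi hxk] at hx⟩

theorem Equiv.Perm.exists_ascent_to_rev {n : ℕ} (σ : Equiv.Perm (Fin n)) {i₀ : Fin n}
    (h : σ i₀ ≠ i₀.rev) : ∃ i k, i < k ∧ σ i < σ k ∧ σ k = i.rev ∧ σ i ≠ i.rev := by
  obtain ⟨i, hi, hmin⟩ := wellFounded_lt.has_min {i | σ i ≠ i.rev} ⟨i₀, h⟩
  have hrev : ∀ j < i, σ j = j.rev := fun j hj => not_not.mp fun hne => hmin j hne hj
  set k := σ.symm i.rev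
  have hk : σ k = i.rev := σ.apply_symm_apply _
  have hik : i < k := by
    refine lt_of_le_of_ne (not_lt.mp fun hki => ?_) fun hik => hi (hik ▸ hk)
    exact hki.ne (Fin.rev_injective ((hrev k hki).symm.trans hk))
  have hσi : σ i < i.rev := by
    refine lt_of_le_of_ne (not_lt.mp fun hlt => ?_) hi
    have hj : (σ i).rev < i := Fin.rev_lt_iff.mp hlt
    exact hj.ne (σ.injective (by rw [hrev _ hj, Fin.rev_rev]))
  exact ⟨i, k, hik, hk ▸ hσi, hk, hi⟩

theorem IsAntiMonge.sum_rev_le {n : ℕ} {M : Type*} [AddCommMonoid M] [PartialOrder M]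
    [IsOrderedAddMonoid M] {A : Fin n → Fin n → M} (hA : IsAntiMonge A)
    (σ : Equiv.Perm (Fin n)) : ∑ i, A i i.rev ≤ ∑ i, A i (σ i) := by
  induction hd : #{i | σ i ≠ i.rev} using Nat.strong_induction_on generalizing σ with
  | _ d ih =>
  by_cases hσ : ∀ i, σ i = i.rev
  · simp only [hσ, le_refl]
  obtain ⟨i₀, h₀⟩ := not_forall.mp hσ
  obtain ⟨i, k, hik, hσik, hk, hi⟩ := σ.exists_ascent_to_rev h₀
  have hfewer := card_filter_swap_ne_lt σ Fin.rev hi hk (Fin.rev_injective.ne hik.ne)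
  calc ∑ x, A x x.rev ≤ ∑ x, A x (((Equiv.swap i k).trans σ) x) := ih _ (hd ▸ hfewer) _ rfl
    _ ≤ ∑ x, A x (σ x) := hA.sum_swap_trans_le σ hik hσik

theorem recovAP_antiMonge_antiMonge_rev_optimal_general (n k : ℕ) (hk : k ≤ n)
    (A B : Fin n → Fin n → ℝ)
    (hA : ∀ i k j l : Fin n, i < k → j < l → A i l + A k j ≤ A i j + A k l)
    (hB : ∀ i k j l : Fin n, i < k → j < l → B i l + B k j ≤ B i j + B k l) :
    k ≤ (Finset.univ.filter fun i : Fin n => Fin.rev i = Fin.rev i).card ∧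
    ∀ σ π : Equiv.Perm (Fin n),
      k ≤ (Finset.univ.filter fun i : Fin n => σ i = π i).card →
      (∑ i, A i i.rev) + (∑ i, B i i.rev) ≤ (∑ i, A i (σ i)) + (∑ i, B i (π i)) :=
  ⟨by simpa using hk, fun σ π _ =>
    add_le_add (IsAntiMonge.sum_rev_le hA σ) (IsAntiMonge.sum_rev_le hB π)⟩

/-- **Both cost matrices Anti-Monge: `(rev, rev)` solves RecovAP.**
If `A` and `B` are Anti-Monge matrices and `0 ≤ k ≤ n`, then the pair consisting of the
anti-diagonal permutation `rev : i ↦ n+1-i` (here `Fin.rev` in 0-based indexing) taken twice is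
feasible (it agrees on all `n ≥ k` indices) and its cost is at most the cost of every
feasible pair `(σ, π)`, i.e. every pair agreeing on at least `k` indices. -/
theorem recovAP_antiMonge_antiMonge_rev_optimal (n k : ℕ) (hn : 1 ≤ n) (hk : k ≤ n)
    (A B : Fin n → Fin n → ℝ)
    (hA : ∀ i k j l : Fin n, i < k → j < l → A i l + A k j ≤ A i j + A k l)
    (hB : ∀ i k j l : Fin n, i < k → j < l → B i l + B k j ≤ B i j + B k l) :
    k ≤ (Finset.univ.filter fun i : Fin n => Fin.rev i = Fin.rev i).card ∧
    ∀ σ π : Equiv.Perm (Fin n),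
      k ≤ (Finset.univ.filter fun i : Fin n => σ i = π i).card →
      (∑ i, A i i.rev) + (∑ i, B i i.rev) ≤ (∑ i, A i (σ i)) + (∑ i, B i (π i)) :=
  recovAP_antiMonge_antiMonge_rev_optimal_general n k hk A B hA hB
end
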